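/- In the plane, the distributional very weak Hessian of the function y(x) = Δ|x| on the unit disc B₁ (i.e., the distribution φ ↦ −(1/2)∫_{B₁} dφ ∧ (y_{,1} dy_{,2} − y_{,2} dy_{,1})) equals πΔ² times the Dirac measure at the origin. -/

import Mathlib

open MeasureTheory Metric
open Set

noncomputable section

abbrev E2 : Type := EuclideanSpace ℝ (Fin 2)

def e2 (i : Fin 2) : E2 := EuclideanSpace.single i (1 : ℝ)

/-- Partial derivative `∂φ/∂xᵢ` at `x`. -/
noncomputable def pd (f : E2 → ℝ) (i : Fin 2) (x : E2) : ℝ := fderiv ℝ f x (e2 i)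

/-- The partial derivatives `y_{,i}(x) = Δ xᵢ/|x|` of `y(x) = Δ|x|`. -/
noncomputable def p (Δ : ℝ) (i : Fin 2) (x : E2) : ℝ := Δ * x i / ‖x‖

/-- `∂ₖ y_{,j}` (defined away from the origin). -/
noncomputable def q (Δ : ℝ) (j k : Fin 2) (x : E2) : ℝ := fderiv ℝ (p Δ j) x (e2 k)

/-- The coefficient of `dxₖ` in the 1-form `ω = y_{,1} d y_{,2} − y_{,2} d y_{,1}`. -/
noncomputable def ω (Δ : ℝ) (k : Fin 2) (x : E2) : ℝ :=
  p Δ 0 x * q Δ 1 k x - p Δ 1 x * q Δ 0 k x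

lemma hasFDerivAt_norm2 {x : E2} (hx : x ≠ 0) :
    HasFDerivAt (fun y : E2 => ‖y‖) (‖x‖⁻¹ • innerSL ℝ x) x := by
  have h0 : ‖x‖ ≠ 0 := norm_ne_zero_iff.mpr hx
  have h1 : HasFDerivAt (fun y : E2 => ‖y‖ ^ 2) (2 • (innerSL ℝ x)) x := by
    simpa using (hasFDerivAt_id x).norm_sq
  have h2 := h1.sqrt (by positivity : ‖x‖ ^ 2 ≠ 0)
  have hfun : (fun y : E2 => √(‖y‖ ^ 2)) = fun y : E2 => ‖y‖ := by
    funext y; rw [Real.sqrt_sq (norm_nonneg y)]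
  rw [hfun] at h2
  refine h2.congr_fderiv ?_
  ext y
  rw [Real.sqrt_sq (norm_nonneg x)]
  simp only [ContinuousLinearMap.coe_smul', Pi.smul_apply, smul_eq_mul,
    ContinuousLinearMap.smul_apply]
  field_simp
  ring

lemma q_eq (Δ : ℝ) (j k : Fin 2) {x : E2} (hx : x ≠ 0) :
    q Δ j k x = (Δ * x j) * (-(‖x‖ ^ 2)⁻¹ * (‖x‖⁻¹ * x k)) + ‖x‖⁻¹ * (Δ * (e2 k) j) := by
  have h0 : ‖x‖ ≠ 0 := norm_ne_zero_iff.mpr hx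
  have hc : HasFDerivAt (fun y : E2 => Δ * y j) (Δ • (EuclideanSpace.proj j : E2 →L[ℝ] ℝ)) x :=
    (EuclideanSpace.proj j : E2 →L[ℝ] ℝ).hasFDerivAt.const_mul Δ
  have hinv : HasFDerivAt (fun y : E2 => ‖y‖⁻¹)
      ((-(‖x‖ ^ 2)⁻¹) • (‖x‖⁻¹ • innerSL ℝ x)) x :=
    (hasDerivAt_inv h0).comp_hasFDerivAt x (hasFDerivAt_norm2 hx)
  have hp : HasFDerivAt (p Δ j)
      ((Δ * x j) • ((-(‖x‖ ^ 2)⁻¹) • (‖x‖⁻¹ • innerSL ℝ x)) + ‖x‖⁻¹ • (Δ • (EuclideanSpace.proj j : E2 →L[ℝ] ℝ))) x := by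
    have := hc.mul hinv
    refine this.congr_of_eventuallyEq (Filter.Eventually.of_forall fun y => ?_)
    simp [p, div_eq_mul_inv]
  have hink : (innerSL ℝ x) (e2 k) = x k := by
    simp only [e2, innerSL_apply_apply, EuclideanSpace.inner_single_right, RCLike.star_def, conj_trivial,
      one_mul]
  rw [q, hp.fderiv]
  simp only [ContinuousLinearMap.add_apply, ContinuousLinearMap.coe_smul', Pi.smul_apply,
    smul_eq_mul, PiLp.proj_apply, hink]

lemma normsq_eq (x : E2) : ‖x‖ ^ 2 = x 0 ^ 2 + x 1 ^ 2 := by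
  rw [EuclideanSpace.norm_eq, Real.sq_sqrt (by positivity)]
  simp [Fin.sum_univ_two]

lemma e2_apply (i j : Fin 2) : e2 i j = if i = j then 1 else 0 := by
  simp [e2, EuclideanSpace.single_apply, eq_comm]

lemma omega_one (Δ : ℝ) {x : E2} (hx : x ≠ 0) : ω Δ 1 x = Δ ^ 2 * x 0 / ‖x‖ ^ 2 := by
  have h0 : ‖x‖ ≠ 0 := norm_ne_zero_iff.mpr hx
  have hn := normsq_eq x
  rw [ω, q_eq Δ 1 1 hx, q_eq Δ 0 1 hx, p, p]
  simp only [e2_apply]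
  norm_num
  field_simp
  nlinarith [sq_nonneg (x 0), sq_nonneg (x 1), hn]

lemma omega_zero (Δ : ℝ) {x : E2} (hx : x ≠ 0) : ω Δ 0 x = -(Δ ^ 2 * x 1) / ‖x‖ ^ 2 := by
  have h0 : ‖x‖ ≠ 0 := norm_ne_zero_iff.mpr hx
  have hn := normsq_eq x
  rw [ω, q_eq Δ 1 0 hx, q_eq Δ 0 0 hx, p, p]
  simp only [e2_apply]
  norm_num
  field_simp
  nlinarith [hn]

def L (z : ℝ × ℝ) : E2 := (WithLp.equiv 2 (Fin 2 → ℝ)).symm ![z.1, z.2]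

@[simp] lemma L_apply_zero (z : ℝ × ℝ) : L z 0 = z.1 := rfl
@[simp] lemma L_apply_one (z : ℝ × ℝ) : L z 1 = z.2 := rfl

lemma L_smul (r : ℝ) (z : ℝ × ℝ) : L (r • z) = r • L z := by
  ext i
  fin_cases i <;> simp [L]

def Tm : (ℝ × ℝ) ≃ᵐ E2 :=
  (MeasurableEquiv.finTwoArrow.symm).trans (MeasurableEquiv.toLp 2 (Fin 2 → ℝ))

lemma Tm_eq : ⇑Tm = L := by
  funext z
  ext i
  fin_cases i <;>
    simp [Tm, L, MeasurableEquiv.coe_toLp, MeasurableEquiv.finTwoArrow]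

lemma L_mp : MeasurePreserving L volume volume := by
  rw [← Tm_eq]
  exact (PiLp.volume_preserving_toLp (Fin 2)).comp
    ((volume_preserving_finTwoArrow ℝ).symm)

lemma L_emb : MeasurableEmbedding L := by
  rw [← Tm_eq]; exact Tm.measurableEmbedding

lemma L_cont : Continuous L := by
  apply (PiLp.continuous_toLp (p := 2) (β := fun _ : Fin 2 => ℝ)).comp
  refine continuous_pi ?_
  intro i
  fin_cases i
  · exact continuous_fst
  · exact continuous_snd

lemma L_normsq (z : ℝ × ℝ) : ‖L z‖ ^ 2 = z.1 ^ 2 + z.2 ^ 2 := by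
  rw [EuclideanSpace.norm_eq, Real.sq_sqrt (by positivity)]
  simp [Fin.sum_univ_two]

lemma L_unit (θ : ℝ) : ‖L (Real.cos θ, Real.sin θ)‖ = 1 := by
  have h := L_normsq (Real.cos θ, Real.sin θ)
  simp only at h
  nlinarith [norm_nonneg (L (Real.cos θ, Real.sin θ)), Real.cos_sq_add_sin_sq θ]

lemma key_integral (φ : E2 → ℝ) (hφ : ContDiff ℝ (⊤ : ℕ∞) φ)
    (hsupp : tsupport φ ⊆ ball (0 : E2) 1) :
    ∫ x : E2, (fderiv ℝ φ x) x / ‖x‖ ^ 2 = -(2 * Real.pi) * φ 0 := by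
  set F : E2 → ℝ := fun x => (fderiv ℝ φ x) x / ‖x‖ ^ 2 with hF
  -- vanishing of fderiv outside the ball
  have hfd0 : ∀ x : E2, x ∉ ball (0 : E2) 1 → fderiv ℝ φ x = 0 := by
    intro x hx
    by_contra hne
    exact hx (hsupp (support_fderiv_subset ℝ (Function.mem_support.mpr hne)))
  -- the unit vector field and the function h
  set v : ℝ → E2 := fun θ => L (Real.cos θ, Real.sin θ) with hv
  set h : ℝ × ℝ → ℝ := fun z => (fderiv ℝ φ (z.1 • v z.2)) (v z.2) with hh
  have hvu : ∀ θ, ‖v θ‖ = 1 := fun θ => L_unit θ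
  have hcont : Continuous h := by
    have hc1 : Continuous (fderiv ℝ φ) := hφ.continuous_fderiv (by simp)
    have hcv : Continuous v := L_cont.comp (Continuous.prodMk Real.continuous_cos Real.continuous_sin)
    exact (hc1.comp ((continuous_fst.smul (hcv.comp continuous_snd)))).clm_apply
      (hcv.comp continuous_snd)
  have hzero : ∀ z : ℝ × ℝ, 1 ≤ z.1 → h z = 0 := by
    intro z hz
    have hnorm : ‖z.1 • v z.2‖ = |z.1| := by rw [norm_smul, hvu, mul_one]; rfl
    have : z.1 • v z.2 ∉ ball (0 : E2) 1 := by
      simp only [mem_ball, dist_zero_right, not_lt, hnorm]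
      exact le_trans hz (le_abs_self _)
    rw [hh]; simp only [hfd0 _ this, ContinuousLinearMap.zero_apply]
  have hderiv : ∀ (θ r : ℝ), HasDerivAt (fun t : ℝ => φ (t • v θ)) (h (r, θ)) r := by
    intro θ r
    have h1 : HasDerivAt (fun t : ℝ => t • v θ) (v θ) r := by
      simpa using (hasDerivAt_id r).smul_const (v θ)
    exact ((hφ.differentiable (by simp) _).hasFDerivAt).comp_hasDerivAt r h1
  have hφv : ∀ θ, φ (v θ) = 0 := by
    intro θ
    apply image_eq_zero_of_notMem_tsupport
    intro hmem
    have := hsupp hmem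
    simp only [mem_ball, dist_zero_right, hvu] at this
    exact lt_irrefl _ this
  -- inner integral
  have hinner : ∀ θ : ℝ, ∫ r in Ioi (0 : ℝ), h (r, θ) = -φ 0 := by
    intro θ
    have hcθ : Continuous (fun r : ℝ => h (r, θ)) :=
      hcont.comp (Continuous.prodMk continuous_id continuous_const)
    have hi1 : IntegrableOn (fun r : ℝ => h (r, θ)) (Ioc 0 1) := by
      exact (hcθ.continuousOn.integrableOn_compact isCompact_Icc).mono_set Ioc_subset_Icc_self
    have hi2 : IntegrableOn (fun r : ℝ => h (r, θ)) (Ioi 1) := by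
      refine (integrableOn_zero).congr_fun (fun r hr => ?_) measurableSet_Ioi
      exact (hzero (r, θ) (le_of_lt hr)).symm
    rw [show Ioi (0:ℝ) = Ioc 0 1 ∪ Ioi 1 from (Ioc_union_Ioi_eq_Ioi zero_le_one).symm,
      setIntegral_union (Ioc_disjoint_Ioi le_rfl) measurableSet_Ioi hi1 hi2]
    have hz2 : ∫ r in Ioi (1:ℝ), h (r, θ) = 0 :=
      setIntegral_eq_zero_of_forall_eq_zero (fun r hr => hzero (r, θ) (le_of_lt hr))
    rw [hz2, add_zero, ← intervalIntegral.integral_of_le zero_le_one,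
      intervalIntegral.integral_eq_sub_of_hasDerivAt (fun r _ => hderiv θ r)
        (hcθ.intervalIntegrable 0 1)]
    simp [hφv θ]
  have htarget : polarCoord.target = Ioi (0:ℝ) ×ˢ Ioo (-Real.pi) Real.pi := rfl
  -- integrability on the product
  have hint : IntegrableOn h (Ioi (0:ℝ) ×ˢ Ioo (-Real.pi) Real.pi) := by
    have h1 : IntegrableOn h (Ioc (0:ℝ) 1 ×ˢ Ioo (-Real.pi) Real.pi) :=
      ((hcont.continuousOn).integrableOn_compact (isCompact_Icc.prod isCompact_Icc)).mono_set
        (prod_mono Ioc_subset_Icc_self Ioo_subset_Icc_self)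
    have h2 : IntegrableOn h (Ioi (1:ℝ) ×ˢ Ioo (-Real.pi) Real.pi) := by
      refine (integrableOn_zero).congr_fun (fun z hz => ?_)
        (measurableSet_Ioi.prod measurableSet_Ioo)
      exact (hzero z (le_of_lt hz.1)).symm
    have h3 := h1.union h2
    rwa [← Set.union_prod, Ioc_union_Ioi_eq_Ioi zero_le_one] at h3
  have hpt : ∀ p ∈ polarCoord.target, p.1 • F (L (polarCoord.symm p)) = h p := by
    intro pp hpp
    rw [htarget] at hpp
    have hr : 0 < pp.1 := hpp.1
    have hsymm : (polarCoord.symm pp) = pp.1 • (Real.cos pp.2, Real.sin pp.2) := by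
      rw [polarCoord_symm_apply]; simp [Prod.smul_mk, smul_eq_mul]
    have hLs : L (polarCoord.symm pp) = pp.1 • v pp.2 := by
      rw [hsymm, L_smul]
    have hns : ‖pp.1 • v pp.2‖ = pp.1 := by
      rw [norm_smul, hvu, mul_one, Real.norm_eq_abs, abs_of_pos hr]
    have hfdsmul : (fderiv ℝ φ (pp.1 • v pp.2)) (pp.1 • v pp.2)
        = pp.1 * (fderiv ℝ φ (pp.1 • v pp.2)) (v pp.2) := by
      rw [ContinuousLinearMap.map_smul]; rfl
    rw [hLs, hF]
    simp only [hns, hfdsmul, smul_eq_mul, hh]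
    field_simp
  calc ∫ x : E2, F x = ∫ z : ℝ × ℝ, F (L z) := (L_mp.integral_comp L_emb F).symm
    _ = ∫ pp in polarCoord.target, pp.1 • F (L (polarCoord.symm pp)) :=
        (integral_comp_polarCoord_symm (fun z => F (L z))).symm
    _ = ∫ pp in polarCoord.target, h pp := by
        exact setIntegral_congr_fun polarCoord.open_target.measurableSet hpt
    _ = ∫ θ in Ioo (-Real.pi) Real.pi, ∫ r in Ioi (0:ℝ), h (r, θ) := by
        rw [htarget, Measure.volume_eq_prod, ← Measure.prod_restrict]
        refine integral_prod_symm h ?_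
        rw [Measure.prod_restrict, ← Measure.volume_eq_prod]
        exact hint
    _ = ∫ _θ in Ioo (-Real.pi) Real.pi, (-φ 0) :=
        setIntegral_congr_fun measurableSet_Ioo (fun θ _ => hinner θ)
    _ = -(2 * Real.pi) * φ 0 := by
        rw [setIntegral_const, Real.volume_real_Ioo_of_le (by have := Real.pi_pos; linarith), smul_eq_mul]
        ring

/-- The very weak Hessian determinant of `y(x) = Δ|x|` on `B₁`, i.e. the
distribution `φ ↦ −(1/2)∫_{B₁} dφ ∧ (y,₁ dy,₂ − y,₂ dy,₁)`, equals `πΔ² δ₀`. -/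
theorem stmt3 (Δ : ℝ) (hΔ : 0 < Δ) (φ : E2 → ℝ) (hφ : ContDiff ℝ (⊤ : ℕ∞) φ)
    (hsupp : tsupport φ ⊆ ball (0 : E2) 1) :
    -(1 / 2) * ∫ x in ball (0 : E2) 1, (pd φ 0 x * ω Δ 1 x - pd φ 1 x * ω Δ 0 x)
      = Real.pi * Δ ^ 2 * φ 0 := by
  have hne : ∀ᵐ x : E2 ∂volume, x ≠ 0 := by
    have hset : {x : E2 | ¬ x ≠ 0} = {0} := by ext x; simp
    rw [ae_iff, hset]
    exact measure_singleton 0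
  set F : E2 → ℝ := fun x => (fderiv ℝ φ x) x / ‖x‖ ^ 2 with hF
  have hpt : ∀ x : E2, x ≠ 0 → pd φ 0 x * ω Δ 1 x - pd φ 1 x * ω Δ 0 x = Δ ^ 2 * F x := by
    intro x hx
    have h0 : ‖x‖ ≠ 0 := norm_ne_zero_iff.mpr hx
    have hdec : (x 0) • e2 0 + (x 1) • e2 1 = x := by
      ext i
      fin_cases i <;> simp [e2, EuclideanSpace.single_apply]
    have hfx : (fderiv ℝ φ x) x = pd φ 0 x * x 0 + pd φ 1 x * x 1 := by
      calc (fderiv ℝ φ x) x = (fderiv ℝ φ x) ((x 0) • e2 0 + (x 1) • e2 1) := by rw [hdec]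
        _ = pd φ 0 x * x 0 + pd φ 1 x * x 1 := by
            rw [map_add, ContinuousLinearMap.map_smul, ContinuousLinearMap.map_smul]
            simp only [pd, smul_eq_mul]
            ring
    rw [omega_one Δ hx, omega_zero Δ hx, hF]
    simp only [hfx]
    field_simp
    ring
  have hball : ∫ x in ball (0:E2) 1, (pd φ 0 x * ω Δ 1 x - pd φ 1 x * ω Δ 0 x)
      = ∫ x in ball (0:E2) 1, Δ ^ 2 * F x := by
    refine setIntegral_congr_ae measurableSet_ball ?_
    filter_upwards [hne] with x hx _
    exact hpt x hx
  have hFout : ∀ x : E2, x ∉ ball (0:E2) 1 → F x = 0 := by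
    intro x hx
    have hz : fderiv ℝ φ x = 0 := by
      by_contra hne'
      exact hx (hsupp (support_fderiv_subset ℝ (Function.mem_support.mpr hne')))
    simp [hF, hz]
  rw [hball, integral_const_mul, setIntegral_eq_integral_of_forall_compl_eq_zero hFout,
    key_integral φ hφ hsupp]
  ring
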